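/- Let U, V, X, Y, Z be random variables forming a Markov chain U → V → X → (Y,Z) on finite spaces. Then H(X|Z) − I(X;V|Y) + I(Z;U) − I(Y;U) + I(X;V|Y,U) = H(X|U,Z). -/
import Mathlib


open scoped BigOperators Classical

variable {Ω : Type} [Fintype Ω]

/-- Probability that the random variable `X` takes the value `x` under the pmf `p`. -/
noncomputable def prEq {α : Type} (p : Ω → ℝ) (X : Ω → α) (x : α) : ℝ :=
  ∑ ω, if X ω = x then p ω else 0

/-- Shannon entropy of a finite random variable. -/
noncomputable def ent {α : Type} [Fintype α] (p : Ω → ℝ) (X : Ω → α) : ℝ :=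
  ∑ x, Real.negMulLog (prEq p X x)

/-- Conditional Shannon entropy `H(X | Y)`. -/
noncomputable def condEnt {α β : Type} [Fintype α] [Fintype β]
    (p : Ω → ℝ) (X : Ω → α) (Y : Ω → β) : ℝ :=
  ent p (fun ω => (X ω, Y ω)) - ent p Y

/-- Mutual information `I(X ; Y)`. -/
noncomputable def mutInf {α β : Type} [Fintype α] [Fintype β]
    (p : Ω → ℝ) (X : Ω → α) (Y : Ω → β) : ℝ :=
  ent p X + ent p Y - ent p (fun ω => (X ω, Y ω))

/-- Conditional mutual information `I(X ; Y | Z)`. -/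
noncomputable def condMutInf {α β γ : Type} [Fintype α] [Fintype β] [Fintype γ]
    (p : Ω → ℝ) (X : Ω → α) (Y : Ω → β) (Z : Ω → γ) : ℝ :=
  condEnt p X Z - condEnt p X (fun ω => (Y ω, Z ω))

/-- `X` and `Y` are conditionally independent given `Z`. -/
def CondIndep {α β γ : Type} (p : Ω → ℝ) (X : Ω → α) (Y : Ω → β) (Z : Ω → γ) : Prop :=
  ∀ x y z,
    prEq p (fun ω => (X ω, Y ω, Z ω)) (x, y, z) * prEq p Z z =
      prEq p (fun ω => (X ω, Z ω)) (x, z) * prEq p (fun ω => (Y ω, Z ω)) (y, z)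

/-- `X` and `Y` are independent. -/
def Indep {α β : Type} (p : Ω → ℝ) (X : Ω → α) (Y : Ω → β) : Prop :=
  ∀ x y, prEq p (fun ω => (X ω, Y ω)) (x, y) = prEq p X x * prEq p Y y

/-- `p` is a probability mass function on `Ω`. -/
def IsPMF (p : Ω → ℝ) : Prop := (∀ ω, 0 ≤ p ω) ∧ ∑ ω, p ω = 1

section helpers

lemma prEq_nonneg {α : Type} (p : Ω → ℝ) (hp : ∀ ω, 0 ≤ p ω) (X : Ω → α) (x : α) :
    0 ≤ prEq p X x := by
  unfold prEq
  exact Finset.sum_nonneg fun ω _ => by split <;> simp [hp ω]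

lemma prEq_congr {α β : Type} (p : Ω → ℝ) (X : Ω → α) (f : α → β)
    (hf : Function.Injective f) (x : α) :
    prEq p (fun ω => f (X ω)) (f x) = prEq p X x := by
  unfold prEq
  refine Finset.sum_congr rfl fun ω _ => ?_
  simp [hf.eq_iff]

lemma ent_comp_inj {α β : Type} [Fintype α] [Fintype β] (p : Ω → ℝ) (X : Ω → α)
    (f : α → β) (hf : Function.Injective f) :
    ent p (fun ω => f (X ω)) = ent p X := by
  unfold ent
  have h1 : ∑ y : β, Real.negMulLog (prEq p (fun ω => f (X ω)) y)
      = ∑ y ∈ Finset.univ.image f, Real.negMulLog (prEq p (fun ω => f (X ω)) y) := by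
    refine (Finset.sum_subset (Finset.subset_univ _) ?_).symm
    intro y _ hy
    have hz : prEq p (fun ω => f (X ω)) y = 0 := by
      unfold prEq
      refine Finset.sum_eq_zero fun ω _ => ?_
      have : f (X ω) ≠ y := fun h => hy (Finset.mem_image.2 ⟨X ω, Finset.mem_univ _, h⟩)
      simp [this]
    simp [hz]
  rw [h1, Finset.sum_image (fun x _ y _ h => hf h)]
  exact Finset.sum_congr rfl fun x _ => by rw [prEq_congr p X f hf]

lemma sum_prEq_pair {α β : Type} [Fintype β] (p : Ω → ℝ) (A : Ω → α) (B : Ω → β) (a : α) :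
    ∑ b, prEq p (fun ω => (A ω, B ω)) (a, b) = prEq p A a := by
  unfold prEq
  rw [Finset.sum_comm]
  refine Finset.sum_congr rfl fun ω _ => ?_
  by_cases h : A ω = a <;> simp [h, Prod.ext_iff]

lemma ite_sum {ι : Type} {c : Prop} [Decidable c] (s : Finset ι) (g : ι → ℝ) :
    (if c then ∑ x ∈ s, g x else 0) = ∑ x ∈ s, if c then g x else 0 := by
  split <;> simp

lemma prEq_comp_fst {α β δ : Type} [Fintype α] (p : Ω → ℝ) (A : Ω → α) (W : Ω → δ)
    (f : α → β) (b : β) (w : δ) :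
    prEq p (fun ω => (f (A ω), W ω)) (b, w)
      = ∑ a, if f a = b then prEq p (fun ω => (A ω, W ω)) (a, w) else 0 := by
  unfold prEq
  beta_reduce
  refine Eq.trans ?_ (Finset.sum_congr rfl fun a _ => (ite_sum _ _).symm)
  rw [Finset.sum_comm]
  refine Finset.sum_congr rfl fun ω _ => ?_
  rw [Finset.sum_eq_single (A ω) (fun a _ ha => by simp [Prod.ext_iff, Ne.symm ha])
    (fun h => absurd (Finset.mem_univ _) h)]
  by_cases h : W ω = w <;> by_cases h2 : f (A ω) = b <;> simp [Prod.ext_iff, h, h2]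


lemma prEq_swap12 {α β γ : Type} (p : Ω → ℝ) (A : Ω → α) (B : Ω → β) (C : Ω → γ)
    (a : α) (b : β) (c : γ) :
    prEq p (fun ω => (A ω, B ω, C ω)) (a, b, c)
      = prEq p (fun ω => (B ω, (A ω, C ω))) (b, (a, c)) := by
  have hσ : Function.Injective (fun x : β × α × γ => (x.2.1, x.1, x.2.2)) := by
    rintro ⟨x1, x2, x3⟩ ⟨y1, y2, y3⟩ hxy
    simp only [Prod.mk.injEq] at hxy
    simp [hxy.1, hxy.2.1, hxy.2.2]
  simpa using (prEq_congr p (fun ω => (B ω, (A ω, C ω))) _ hσ (b, (a, c)))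

lemma condIndep_comp {α α' β β' γ : Type} [Fintype α] [Fintype β]
    {p : Ω → ℝ} {A : Ω → α} {B : Ω → β} {C : Ω → γ}
    (f : α → α') (g : β → β')
    (h : CondIndep p A B C) :
    CondIndep p (fun ω => f (A ω)) (fun ω => g (B ω)) C := by
  intro a' b' c
  have key : prEq p (fun ω => (f (A ω), g (B ω), C ω)) (a', b', c)
      = ∑ a, if f a = a' then
          (∑ b, if g b = b' then prEq p (fun ω => (A ω, B ω, C ω)) (a, b, c) else 0) else 0 := by
    rw [prEq_comp_fst p A (fun ω => (g (B ω), C ω)) f a' (b', c)]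
    refine Finset.sum_congr rfl fun a _ => ?_
    by_cases ha : f a = a'
    · simp only [ha, if_true]
      rw [prEq_swap12 p A (fun ω => g (B ω)) C a b' c,
        prEq_comp_fst p B (fun ω => (A ω, C ω)) g b' (a, c)]
      refine Finset.sum_congr rfl fun b _ => ?_
      by_cases hb : g b = b'
      · simp only [hb, if_true]
        exact (prEq_swap12 p A B C a b c).symm
      · simp [hb]
    · simp [ha]
  have mA : prEq p (fun ω => (f (A ω), C ω)) (a', c)
      = ∑ a, if f a = a' then prEq p (fun ω => (A ω, C ω)) (a, c) else 0 :=
    prEq_comp_fst p A C f a' c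
  have mB : prEq p (fun ω => (g (B ω), C ω)) (b', c)
      = ∑ b, if g b = b' then prEq p (fun ω => (B ω, C ω)) (b, c) else 0 :=
    prEq_comp_fst p B C g b' c
  rw [key, mA, mB, Finset.sum_mul, Finset.sum_mul]
  refine Finset.sum_congr rfl fun a _ => ?_
  by_cases ha : f a = a'
  · simp only [ha, if_true]
    rw [Finset.sum_mul, Finset.mul_sum]
    refine Finset.sum_congr rfl fun b _ => ?_
    by_cases hb : g b = b'
    · simp only [hb, if_true]
      exact h a b c
    · simp [hb]
  · simp [ha]

lemma prEq_marg_b {α β γ : Type} [Fintype β] (p : Ω → ℝ) (A : Ω → α) (B : Ω → β) (C : Ω → γ)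
    (a : α) (c : γ) :
    prEq p (fun ω => (A ω, C ω)) (a, c)
      = ∑ b, prEq p (fun ω => (A ω, B ω, C ω)) (a, b, c) := by
  rw [← sum_prEq_pair p (fun ω => (A ω, C ω)) B (a, c)]
  refine Finset.sum_congr rfl fun b _ => ?_
  have hσ : Function.Injective (fun x : α × β × γ => ((x.1, x.2.2), x.2.1)) := by
    rintro ⟨x1, x2, x3⟩ ⟨y1, y2, y3⟩ hxy
    simp only [Prod.mk.injEq] at hxy
    simp [hxy.1.1, hxy.1.2, hxy.2]
  simpa using (prEq_congr p (fun ω => (A ω, B ω, C ω)) _ hσ (a, b, c))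

lemma prEq_marg_a {α β γ : Type} [Fintype α] (p : Ω → ℝ) (A : Ω → α) (B : Ω → β) (C : Ω → γ)
    (b : β) (c : γ) :
    prEq p (fun ω => (B ω, C ω)) (b, c)
      = ∑ a, prEq p (fun ω => (A ω, B ω, C ω)) (a, b, c) := by
  rw [← sum_prEq_pair p (fun ω => (B ω, C ω)) A (b, c)]
  refine Finset.sum_congr rfl fun a _ => ?_
  have hσ : Function.Injective (fun x : α × β × γ => ((x.2.1, x.2.2), x.1)) := by
    rintro ⟨x1, x2, x3⟩ ⟨y1, y2, y3⟩ hxy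
    simp only [Prod.mk.injEq] at hxy
    simp [hxy.1.1, hxy.1.2, hxy.2]
  simpa using (prEq_congr p (fun ω => (A ω, B ω, C ω)) _ hσ (a, b, c))

lemma prEq_marg_ab {α β γ : Type} [Fintype α] [Fintype β] (p : Ω → ℝ)
    (A : Ω → α) (B : Ω → β) (C : Ω → γ) (c : γ) :
    prEq p C c = ∑ a, ∑ b, prEq p (fun ω => (A ω, B ω, C ω)) (a, b, c) := by
  rw [← sum_prEq_pair p C (fun ω => (A ω, B ω)) c, Fintype.sum_prod_type]
  refine Finset.sum_congr rfl fun a _ => Finset.sum_congr rfl fun b _ => ?_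
  have hσ : Function.Injective (fun x : α × β × γ => (x.2.2, x.1, x.2.1)) := by
    rintro ⟨x1, x2, x3⟩ ⟨y1, y2, y3⟩ hxy
    simp only [Prod.mk.injEq] at hxy
    simp [hxy.1, hxy.2.1, hxy.2.2]
  simpa using (prEq_congr p (fun ω => (A ω, B ω, C ω)) _ hσ (a, b, c))



lemma neg_sum_mul {ι : Type} (s : Finset ι) (f : ι → ℝ) (L : ℝ) :
    - (∑ x ∈ s, f x) * L = ∑ x ∈ s, - f x * L := by
  rw [← Finset.sum_neg_distrib, Finset.sum_mul]

lemma negMulLog_sum {ι : Type} (s : Finset ι) (f : ι → ℝ) :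
    Real.negMulLog (∑ x ∈ s, f x) = ∑ x ∈ s, - f x * Real.log (∑ x ∈ s, f x) := by
  rw [Real.negMulLog]
  exact neg_sum_mul _ _ _

lemma sum_rot3 {ι₁ ι₂ ι₃ : Type} [Fintype ι₁] [Fintype ι₂] [Fintype ι₃] (t : ι₁ → ι₂ → ι₃ → ℝ) :
    ∑ b : ι₂, ∑ c : ι₃, ∑ a : ι₁, t a b c = ∑ a, ∑ b, ∑ c, t a b c := by
  refine Eq.trans (Finset.sum_congr rfl fun b _ => Finset.sum_comm) ?_
  exact Finset.sum_comm

lemma sum_rot3' {ι₁ ι₂ ι₃ : Type} [Fintype ι₁] [Fintype ι₂] [Fintype ι₃] (t : ι₁ → ι₂ → ι₃ → ℝ) :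
    ∑ c : ι₃, ∑ a : ι₁, ∑ b : ι₂, t a b c = ∑ a, ∑ b, ∑ c, t a b c := by
  refine Eq.trans (Finset.sum_comm) ?_
  exact Finset.sum_congr rfl fun a _ => Finset.sum_comm

lemma ent_triple_expand {α β γ : Type} [Fintype α] [Fintype β] [Fintype γ]
    (p : Ω → ℝ) (W : Ω → α × β × γ) :
    ent p W = ∑ a, ∑ b, ∑ c, Real.negMulLog (prEq p W (a, b, c)) := by
  unfold ent
  rw [Fintype.sum_prod_type]
  exact Finset.sum_congr rfl fun a _ => by rw [Fintype.sum_prod_type]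

lemma condIndep_ent {α β γ : Type} [Fintype α] [Fintype β] [Fintype γ]
    (p : Ω → ℝ) (hp : IsPMF p) (A : Ω → α) (B : Ω → β) (C : Ω → γ)
    (h : CondIndep p A B C) :
    ent p (fun ω => (A ω, B ω, C ω)) =
      ent p (fun ω => (A ω, C ω)) + ent p (fun ω => (B ω, C ω)) - ent p C := by
  classical
  set q : α → β → γ → ℝ := fun a b c => prEq p (fun ω => (A ω, B ω, C ω)) (a, b, c) with hqdef
  have hq0 : ∀ a b c, 0 ≤ q a b c := fun a b c => prEq_nonneg p hp.1 _ _
  have hr : ∀ a c, prEq p (fun ω => (A ω, C ω)) (a, c) = ∑ b, q a b c :=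
    fun a c => prEq_marg_b p A B C a c
  have hs : ∀ b c, prEq p (fun ω => (B ω, C ω)) (b, c) = ∑ a, q a b c :=
    fun b c => prEq_marg_a p A B C b c
  have ht : ∀ c, prEq p C c = ∑ a, ∑ b, q a b c :=
    fun c => prEq_marg_ab p A B C c
  -- pointwise identity
  have main : ∀ a b c,
      Real.negMulLog (q a b c)
        - (- q a b c * Real.log (∑ b', q a b' c))
        - (- q a b c * Real.log (∑ a', q a' b c))
        + (- q a b c * Real.log (∑ a', ∑ b', q a' b' c)) = 0 := by
    intro a b c
    rcases (hq0 a b c).eq_or_lt with h0 | h0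
    · simp [← h0]
    · have hrpos : 0 < ∑ b', q a b' c :=
        lt_of_lt_of_le h0 (Finset.single_le_sum (fun b' _ => hq0 a b' c) (Finset.mem_univ b))
      have hspos : 0 < ∑ a', q a' b c :=
        lt_of_lt_of_le h0 (Finset.single_le_sum (fun a' _ => hq0 a' b c) (Finset.mem_univ a))
      have htpos : 0 < ∑ a', ∑ b', q a' b' c :=
        lt_of_lt_of_le hrpos (Finset.single_le_sum
          (fun a' _ => Finset.sum_nonneg fun b' _ => hq0 a' b' c) (Finset.mem_univ a))
      have hqt : q a b c * (∑ a', ∑ b', q a' b' c) = (∑ b', q a b' c) * (∑ a', q a' b c) := by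
        rw [← hr, ← hs, ← ht]
        exact h a b c
      have hlog : Real.log (q a b c) + Real.log (∑ a', ∑ b', q a' b' c)
          = Real.log (∑ b', q a b' c) + Real.log (∑ a', q a' b c) := by
        rw [← Real.log_mul (ne_of_gt h0) (ne_of_gt htpos),
          ← Real.log_mul (ne_of_gt hrpos) (ne_of_gt hspos), hqt]
      have hlq : Real.log (q a b c)
          = Real.log (∑ b', q a b' c) + Real.log (∑ a', q a' b c)
            - Real.log (∑ a', ∑ b', q a' b' c) := by linarith
      rw [Real.negMulLog, hlq]
      ring
  have key : ∑ a, ∑ b, ∑ c,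
      (Real.negMulLog (q a b c)
        - (- q a b c * Real.log (∑ b', q a b' c))
        - (- q a b c * Real.log (∑ a', q a' b c))
        + (- q a b c * Real.log (∑ a', ∑ b', q a' b' c))) = 0 :=
    Finset.sum_eq_zero fun a _ => Finset.sum_eq_zero fun b _ => Finset.sum_eq_zero fun c _ =>
      main a b c
  simp only [Finset.sum_add_distrib, Finset.sum_sub_distrib] at key
  have e1 : ent p (fun ω => (A ω, B ω, C ω)) = ∑ a, ∑ b, ∑ c, Real.negMulLog (q a b c) :=
    ent_triple_expand p _
  have e2 : ent p (fun ω => (A ω, C ω))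
      = ∑ a, ∑ b, ∑ c, (- q a b c * Real.log (∑ b', q a b' c)) := by
    unfold ent
    rw [Fintype.sum_prod_type]
    refine Finset.sum_congr rfl fun a _ => ?_
    refine Eq.trans (Finset.sum_congr rfl fun c _ => by rw [hr a c, negMulLog_sum]) ?_
    exact Finset.sum_comm
  have e3 : ent p (fun ω => (B ω, C ω))
      = ∑ a, ∑ b, ∑ c, (- q a b c * Real.log (∑ a', q a' b c)) := by
    unfold ent
    rw [Fintype.sum_prod_type]
    refine Eq.trans (Finset.sum_congr rfl fun b _ =>
      Finset.sum_congr rfl fun c _ => by rw [hs b c, negMulLog_sum]) ?_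
    exact sum_rot3 _
  have e4 : ent p C
      = ∑ a, ∑ b, ∑ c, (- q a b c * Real.log (∑ a', ∑ b', q a' b' c)) := by
    unfold ent
    refine Eq.trans (Finset.sum_congr rfl fun c _ => ?_) (sum_rot3' _)
    rw [ht c, negMulLog_sum]
    exact Finset.sum_congr rfl fun a _ => neg_sum_mul _ _ _
  rw [e1, e2, e3, e4]
  linarith [key]

lemma ent_swap {α β : Type} [Fintype α] [Fintype β] (p : Ω → ℝ) (A : Ω → α) (B : Ω → β) :
    ent p (fun ω => (A ω, B ω)) = ent p (fun ω => (B ω, A ω)) := by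
  simpa using ent_comp_inj p (fun ω => (B ω, A ω)) (fun x => (x.2, x.1))
    (fun x y h => by
      obtain ⟨x1, x2⟩ := x; obtain ⟨y1, y2⟩ := y
      simp only [Prod.mk.injEq] at h; simp [h.1, h.2])

end helpers

theorem stmt3 {𝓤 𝓥 𝓧 𝓨 𝓩 : Type} [Fintype 𝓤] [Fintype 𝓥] [Fintype 𝓧] [Fintype 𝓨] [Fintype 𝓩]
    (p : Ω → ℝ) (hp : IsPMF p)
    (U : Ω → 𝓤) (V : Ω → 𝓥) (X : Ω → 𝓧) (Y : Ω → 𝓨) (Z : Ω → 𝓩)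
    (hmc1 : CondIndep p U (fun ω => (X ω, Y ω, Z ω)) V)
    (hmc2 : CondIndep p (fun ω => (U ω, V ω)) (fun ω => (Y ω, Z ω)) X) :
    condEnt p X Z - condMutInf p X V Y + mutInf p Z U - mutInf p Y U +
        condMutInf p X V (fun ω => (Y ω, U ω)) =
      condEnt p X (fun ω => (U ω, Z ω)) := by
  have c1 : CondIndep p U Z X := by
    have h := condIndep_comp (fun x : 𝓤 × 𝓥 => x.1) (fun x : 𝓨 × 𝓩 => x.2) hmc2
    intro a b c; simpa using h a b c
  have c2 : CondIndep p V Y X := by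
    have h := condIndep_comp (fun x : 𝓤 × 𝓥 => x.2) (fun x : 𝓨 × 𝓩 => x.1) hmc2
    intro a b c; simpa using h a b c
  have c3 : CondIndep p U Y X := by
    have h := condIndep_comp (fun x : 𝓤 × 𝓥 => x.1) (fun x : 𝓨 × 𝓩 => x.1) hmc2
    intro a b c; simpa using h a b c
  have c4 : CondIndep p (fun ω => (U ω, V ω)) Y X := by
    have h := condIndep_comp (fun x : 𝓤 × 𝓥 => x) (fun x : 𝓨 × 𝓩 => x.1) hmc2
    intro a b c; simpa using h a b c
  have c5 : CondIndep p U X V := by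
    have h := condIndep_comp (fun x : 𝓤 => x) (fun x : 𝓧 × 𝓨 × 𝓩 => x.1) hmc1
    intro a b c; simpa using h a b c
  have c6 : CondIndep p U Y V := by
    have h := condIndep_comp (fun x : 𝓤 => x) (fun x : 𝓧 × 𝓨 × 𝓩 => x.2.1) hmc1
    intro a b c; simpa using h a b c
  have E1 := condIndep_ent p hp U Z X c1
  have E2 := condIndep_ent p hp V Y X c2
  have E3 := condIndep_ent p hp U Y X c3
  have E4 := condIndep_ent p hp (fun ω => (U ω, V ω)) Y X c4
  have E5 := condIndep_ent p hp U X V c5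
  have E6 := condIndep_ent p hp U Y V c6
  -- relabelings
  have r1 : ent p (fun ω => (X ω, (U ω, Z ω))) = ent p (fun ω => (U ω, Z ω, X ω)) := by
    simpa using ent_comp_inj p (fun ω => (U ω, Z ω, X ω)) (fun x : 𝓤 × 𝓩 × 𝓧 => (x.2.2, (x.1, x.2.1)))
      (fun x y h => by
        obtain ⟨x1, x2, x3⟩ := x; obtain ⟨y1, y2, y3⟩ := y
        simp only [Prod.mk.injEq] at h; simp [h.1, h.2.1, h.2.2])
  have r2 : ent p (fun ω => (X ω, (V ω, Y ω))) = ent p (fun ω => (V ω, Y ω, X ω)) := by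
    simpa using ent_comp_inj p (fun ω => (V ω, Y ω, X ω)) (fun x : 𝓥 × 𝓨 × 𝓧 => (x.2.2, (x.1, x.2.1)))
      (fun x y h => by
        obtain ⟨x1, x2, x3⟩ := x; obtain ⟨y1, y2, y3⟩ := y
        simp only [Prod.mk.injEq] at h; simp [h.1, h.2.1, h.2.2])
  have r3 : ent p (fun ω => (X ω, (Y ω, U ω))) = ent p (fun ω => (U ω, Y ω, X ω)) := by
    simpa using ent_comp_inj p (fun ω => (U ω, Y ω, X ω)) (fun x : 𝓤 × 𝓨 × 𝓧 => (x.2.2, (x.2.1, x.1)))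
      (fun x y h => by
        obtain ⟨x1, x2, x3⟩ := x; obtain ⟨y1, y2, y3⟩ := y
        simp only [Prod.mk.injEq] at h; simp [h.1, h.2.1, h.2.2])
  have r4 : ent p (fun ω => (X ω, (V ω, (Y ω, U ω)))) = ent p (fun ω => ((U ω, V ω), Y ω, X ω)) := by
    simpa using ent_comp_inj p (fun ω => ((U ω, V ω), Y ω, X ω))
      (fun x : (𝓤 × 𝓥) × 𝓨 × 𝓧 => (x.2.2, (x.1.2, (x.2.1, x.1.1))))
      (fun x y h => by
        obtain ⟨⟨x1, x2⟩, x3, x4⟩ := x; obtain ⟨⟨y1, y2⟩, y3, y4⟩ := y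
        simp only [Prod.mk.injEq] at h; simp [h.1, h.2.1, h.2.2.1, h.2.2.2])
  have r5 : ent p (fun ω => (X ω, (V ω, U ω))) = ent p (fun ω => ((U ω, V ω), X ω)) := by
    simpa using ent_comp_inj p (fun ω => ((U ω, V ω), X ω))
      (fun x : (𝓤 × 𝓥) × 𝓧 => (x.2, (x.1.2, x.1.1)))
      (fun x y h => by
        obtain ⟨⟨x1, x2⟩, x3⟩ := x; obtain ⟨⟨y1, y2⟩, y3⟩ := y
        simp only [Prod.mk.injEq] at h; simp [h.1, h.2.1, h.2.2])
  have r6 : ent p (fun ω => (X ω, (V ω, U ω))) = ent p (fun ω => (U ω, X ω, V ω)) := by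
    simpa using ent_comp_inj p (fun ω => (U ω, X ω, V ω)) (fun x : 𝓤 × 𝓧 × 𝓥 => (x.2.1, (x.2.2, x.1)))
      (fun x y h => by
        obtain ⟨x1, x2, x3⟩ := x; obtain ⟨y1, y2, y3⟩ := y
        simp only [Prod.mk.injEq] at h; simp [h.1, h.2.1, h.2.2])
  have r7 : ent p (fun ω => (V ω, (Y ω, U ω))) = ent p (fun ω => (U ω, Y ω, V ω)) := by
    simpa using ent_comp_inj p (fun ω => (U ω, Y ω, V ω)) (fun x : 𝓤 × 𝓨 × 𝓥 => (x.2.2, (x.2.1, x.1)))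
      (fun x y h => by
        obtain ⟨x1, x2, x3⟩ := x; obtain ⟨y1, y2, y3⟩ := y
        simp only [Prod.mk.injEq] at h; simp [h.1, h.2.1, h.2.2])
  have s1 := ent_swap p U X
  have s2 := ent_swap p Z X
  have s3 := ent_swap p V X
  have s4 := ent_swap p Y X
  have s5 := ent_swap p Y V
  have s6 := ent_swap p Z U
  simp only [condEnt, condMutInf, mutInf]
  linarith [E1, E2, E3, E4, E5, E6, r1, r2, r3, r4, r5, r6, r7, s1, s2, s3, s4, s5, s6]
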